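/- Let G be a group, V a finite-dimensional real inner product space, ρ : G →* (V ≃ₗᵢ[ℝ] V) an orthogonal representation, and W : Fin p → Submodule ℝ V a family of invariant submodules such that: the W i are pairwise orthogonal (⟪x, y⟫ = 0 whenever x ∈ W i, y ∈ W j, i ≠ j) and ⨆ i, W i = ⊤; each W i is irreducible (W i ≠ ⊥ and the only invariant submodules contained in W i are ⊥ and W i); and for all i ≠ j every intertwining linear map from W i to W j is zero. Then the set of linear maps A : V →ₗ[ℝ] V that are both equivariant and self-adjoint is an ℝ-submodule of V →ₗ[ℝ] V of finrank exactly p. -/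

import Mathlib

/-! An equivariant symmetric operator `A` maps each `W i` into itself: the `W j`-component of
`A` restricted to `W i` intertwines, hence vanishes for `j ≠ i`. On `W i` the symmetric operator
`A` has an eigenvalue `μ i`, and the corresponding eigenvectors in `W i` form a nonzero invariant
subspace, hence all of `W i` by irreducibility. So `A = ∑ μ i • P i` with `P i` the orthogonal
projection onto `W i`. Conversely each `P i` is equivariant and symmetric, and the `P i` are
linearly independent since the `W i` are nonzero and mutually orthogonal. -/

open scoped RealInnerProductSpace

open Submodule

namespace OrthogonalFamily

variable {𝕜 E ι : Type*} [RCLike 𝕜] [NormedAddCommGroup E] [InnerProductSpace 𝕜 E]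
  {W : ι → Submodule 𝕜 E} (hW : OrthogonalFamily 𝕜 (fun i => W i) fun i => (W i).subtypeₗᵢ)
include hW

theorem starProjection_eq_zero_of_mem {i j : ι} [(W j).HasOrthogonalProjection] (hij : i ≠ j)
    {x : E} (hx : x ∈ W i) : (W j).starProjection x = 0 :=
  (starProjection_apply_eq_zero_iff _).2 (hW.isOrtho hij hx)

theorem linearIndependent_starProjection [∀ i, (W i).HasOrthogonalProjection]
    (hW0 : ∀ i, W i ≠ ⊥) : LinearIndependent 𝕜 fun i => ((W i).starProjection : E →ₗ[𝕜] E) := by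
  refine linearIndependent_iff'.2 fun s c hc i hi => ?_
  obtain ⟨v, hv, hv0⟩ := (Submodule.ne_bot_iff _).1 (hW0 i)
  have hcv : ∑ j ∈ s, c j • (W j).starProjection v = 0 := by
    simpa using congrArg (· v) hc
  rw [Finset.sum_eq_single_of_mem i hi fun j _ hji => by
    rw [hW.starProjection_eq_zero_of_mem hji.symm hv, smul_zero],
    starProjection_eq_self_iff.2 hv] at hcv
  exact (smul_eq_zero.1 hcv).resolve_right hv0

variable [Fintype ι] [∀ i, CompleteSpace (W i)] (hsup : ⨆ i, W i = ⊤)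
include hsup

theorem sum_starProjection_eq_self (x : E) : ∑ i, (W i).starProjection x = x :=
  hW.sum_projection_of_mem_iSup x (hsup ▸ mem_top)

theorem eq_sum_smul_starProjection {A : E →ₗ[𝕜] E} {μ : ι → 𝕜}
    (hA : ∀ i, ∀ x ∈ W i, A x = μ i • x) :
    A = ∑ i, μ i • ((W i).starProjection : E →ₗ[𝕜] E) := by
  ext x
  conv_lhs => rw [← hW.sum_starProjection_eq_self hsup x]
  simp [map_sum, hA _ _ (starProjection_apply_mem _ _)]

end OrthogonalFamily

namespace IsometricRep

variable {𝕜 G E : Type*} [RCLike 𝕜] [Group G] [NormedAddCommGroup E] [InnerProductSpace 𝕜 E]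
  (ρ : G →* (E ≃ₗᵢ[𝕜] E))

def Invariant (U : Submodule 𝕜 E) : Prop :=
  ∀ g, ∀ x ∈ U, ρ g x ∈ U

def IsIrreducible (W : Submodule 𝕜 E) : Prop :=
  W ≠ ⊥ ∧ ∀ U, Invariant ρ U → U ≤ W → U = ⊥ ∨ U = W

def Equivariant (A : E →ₗ[𝕜] E) : Prop :=
  ∀ g x, A (ρ g x) = ρ g (A x)

variable {ρ}

theorem Invariant.equivariant_starProjection {U : Submodule 𝕜 E} [U.HasOrthogonalProjection]
    (hU : Invariant ρ U) : Equivariant ρ U.starProjection := by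
  intro g x
  refine eq_starProjection_of_mem_of_inner_eq_zero (hU g _ (U.starProjection_apply_mem x))
    fun w hw => ?_
  have hw' : (ρ g).symm w ∈ U := by simpa [← LinearIsometryEquiv.coe_inv] using hU g⁻¹ w hw
  rw [← map_sub, LinearIsometryEquiv.inner_map_eq_flip]
  exact U.starProjection_inner_eq_zero x _ hw'

theorem Equivariant.mapsTo_of_forall_intertwining_eq_zero {ι : Type*} [Fintype ι]
    {W : ι → Submodule 𝕜 E} [∀ i, CompleteSpace (W i)]
    (hW : OrthogonalFamily 𝕜 (fun i => W i) fun i => (W i).subtypeₗᵢ) (hsup : ⨆ i, W i = ⊤)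
    (hinv : ∀ i, Invariant ρ (W i))
    (hnocoupling : ∀ i j, i ≠ j → ∀ f : W i →ₗ[𝕜] W j,
      (∀ g (x : W i), ((f ⟨ρ g x, hinv i g x x.2⟩ : W j) : E) = ρ g (f x)) → f = 0)
    {A : E →ₗ[𝕜] E} (hA : Equivariant ρ A) (i : ι) : ∀ x ∈ W i, A x ∈ W i := by
  intro x hx
  have hcross : ∀ j ≠ i, (W j).starProjection (A x) = 0 := by
    intro j hji
    let f := (W j).orthogonalProjectionOnto.toLinearMap ∘ₗ A ∘ₗ (W i).subtype
    have hf : f = 0 := hnocoupling i j hji.symm f fun g y =>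
      (congrArg _ (hA g y)).trans ((hinv j).equivariant_starProjection g (A y))
    simpa [f] using congrArg (fun f => (f ⟨x, hx⟩ : E)) hf
  rw [← hW.sum_starProjection_eq_self hsup (A x), Finset.sum_eq_single i (fun j _ => hcross j)
    (by simp)]
  exact starProjection_apply_mem _ _

theorem Equivariant.exists_eq_smul_of_isSymmetric [FiniteDimensional 𝕜 E] {A : E →ₗ[𝕜] E}
    (hA : Equivariant ρ A) (hAsymm : A.IsSymmetric) {W : Submodule 𝕜 E} (hinv : Invariant ρ W)
    (hirr : IsIrreducible ρ W) (hAW : ∀ x ∈ W, A x ∈ W) : ∃ μ : 𝕜, ∀ x ∈ W, A x = μ • x := by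
  have : Nontrivial W := nontrivial_iff_ne_bot.2 hirr.1
  obtain ⟨μ, hμ⟩ : ∃ μ : 𝕜, Module.End.HasEigenvalue (A.restrict hAW) μ :=
    ⟨_, (hAsymm.restrict_invariant hAW).hasEigenvalue_iSup_of_finiteDimensional⟩
  obtain ⟨⟨v, hvW⟩, hv, hv0⟩ := hμ.exists_hasEigenvector
  have hAv : A v = μ • v := congrArg Subtype.val (Module.End.mem_eigenspace_iff.1 hv)
  set U := W ⊓ Module.End.eigenspace A μ
  have hUinv : Invariant ρ U := by
    rintro g x ⟨hxW, hx⟩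
    refine ⟨hinv g x hxW, ?_⟩
    rw [SetLike.mem_coe, Module.End.mem_eigenspace_iff] at hx ⊢
    rw [hA, hx, map_smul]
  have hU0 : U ≠ ⊥ :=
    (Submodule.ne_bot_iff U).2 ⟨v, ⟨hvW, Module.End.mem_eigenspace_iff.2 hAv⟩, by simpa using hv0⟩
  have hUW : U = W := (hirr.2 U hUinv inf_le_left).resolve_left hU0
  exact ⟨μ, fun x hx => Module.End.mem_eigenspace_iff.1 (hUW.ge hx).2⟩

section Real

variable {V : Type*} [NormedAddCommGroup V] [InnerProductSpace ℝ V]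

def symmetricEquivariant (ρ : G →* (V ≃ₗᵢ[ℝ] V)) : Submodule ℝ (V →ₗ[ℝ] V) where
  carrier := {A | Equivariant ρ A ∧ A.IsSymmetric}
  add_mem' := fun ⟨hA, hA'⟩ ⟨hB, hB'⟩ => ⟨fun g x => by simp [hA g x, hB g x], hA'.add hB'⟩
  zero_mem' := ⟨fun g x => by simp, LinearMap.IsSymmetric.zero⟩
  smul_mem' := fun c _ ⟨hA, hA'⟩ => ⟨fun g x => by simp [hA g x], hA'.smul (by simp)⟩

theorem symmetricEquivariant_eq_span [FiniteDimensional ℝ V] {ρ : G →* (V ≃ₗᵢ[ℝ] V)}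
    {ι : Type*} [Fintype ι] {W : ι → Submodule ℝ V}
    (hW : OrthogonalFamily ℝ (fun i => W i) fun i => (W i).subtypeₗᵢ) (hsup : ⨆ i, W i = ⊤)
    (hinv : ∀ i, Invariant ρ (W i)) (hirr : ∀ i, IsIrreducible ρ (W i))
    (hnocoupling : ∀ i j, i ≠ j → ∀ f : W i →ₗ[ℝ] W j,
      (∀ g (x : W i), ((f ⟨ρ g x, hinv i g x x.2⟩ : W j) : V) = ρ g (f x)) → f = 0) :
    symmetricEquivariant ρ = span ℝ (Set.range fun i => ((W i).starProjection : V →ₗ[ℝ] V)) := by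
  refine le_antisymm (fun A hA => ?_) (span_le.2 ?_)
  · obtain ⟨hA, hAsymm⟩ : Equivariant ρ A ∧ A.IsSymmetric := hA
    choose μ hμ using fun i => hA.exists_eq_smul_of_isSymmetric hAsymm (hinv i) (hirr i)
      (hA.mapsTo_of_forall_intertwining_eq_zero hW hsup hinv hnocoupling i)
    rw [hW.eq_sum_smul_starProjection hsup hμ]
    exact sum_mem fun i _ => smul_mem _ _ (Submodule.subset_span ⟨i, rfl⟩)
  · rintro _ ⟨i, rfl⟩
    exact ⟨(hinv i).equivariant_starProjection, starProjection_isSymmetric (W i)⟩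

end Real

end IsometricRep

theorem isotropic_symmetric_operators_finrank
    {G : Type*} [Group G] {V : Type*} [NormedAddCommGroup V]
    [InnerProductSpace ℝ V] [FiniteDimensional ℝ V]
    {p : ℕ} (ρ : G →* (V ≃ₗᵢ[ℝ] V))
    (W : Fin p → Submodule ℝ V)
    (hinv : ∀ (i : Fin p) (g : G), ∀ x ∈ W i, ρ g x ∈ W i)
    (horth : ∀ (i j : Fin p), i ≠ j → ∀ x ∈ W i, ∀ y ∈ W j, ⟪x, y⟫ = 0)
    (hsup : ⨆ i, W i = ⊤)
    (hirr : ∀ i : Fin p, W i ≠ ⊥ ∧ ∀ U : Submodule ℝ V,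
      (∀ (g : G), ∀ x ∈ U, ρ g x ∈ U) → U ≤ W i → U = ⊥ ∨ U = W i)
    (hnocoupling : ∀ (i j : Fin p), i ≠ j → ∀ f : W i →ₗ[ℝ] W j,
      (∀ (g : G) (x : W i),
        ((f ⟨ρ g (x : V), hinv i g (x : V) x.2⟩ : W j) : V) = ρ g ((f x : W j) : V)) →
      f = 0) :
    ∃ S : Submodule ℝ (V →ₗ[ℝ] V),
      (∀ A : V →ₗ[ℝ] V, A ∈ S ↔
        ((∀ (g : G) (x : V), A (ρ g x) = ρ g (A x)) ∧
          (∀ x y : V, ⟪A x, y⟫ = ⟪x, A y⟫))) ∧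
      Module.finrank ℝ S = p := by
  have hW : OrthogonalFamily ℝ (fun i => W i) fun i => (W i).subtypeₗᵢ :=
    .of_pairwise fun i j hij => isOrtho_iff_inner_eq.2 (horth i j hij)
  refine ⟨IsometricRep.symmetricEquivariant ρ, fun A => Iff.rfl, ?_⟩
  rw [IsometricRep.symmetricEquivariant_eq_span hW hsup hinv hirr hnocoupling,
    finrank_span_eq_card (hW.linearIndependent_starProjection fun i => (hirr i).1),
    Fintype.card_fin]
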